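/- arXiv:math/9805047 — 4 statements merged into one kernel-verified Lean document; each statement's English description precedes it below -/
import Mathlib

section
/- Let R be an associative unital ring and A, B ∈ R. For m ≥ 1 let X_m = Σ_{J∈V_m} [B,A;J] be the sum of multiple commutators over the set V_m. Then X_1 = B, and for every m ≥ 2 one has the recurrence X_m = B·X_{m−1} + [X_{m−1}, A], where [X,A] = XA − AX. -/
/-- The (right) adjoint action: `ad_A X = [X, A] = X*A - A*X`. -/
def adRight {R : Type*} [Ring R] (A X : R) : R := X * A - A * X

/-- Multiple commutator `[B,A;J]` computed on the *reversed* list of indices: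
`mcRev A B [] = 1`, and `mcRev A B (j :: rest) = ad_A^[j] (B * mcRev A B rest)`.
This encodes: `[B,A;(j)] = ad_A^j B` and `[B,A;J∪j] = ad_A^j (B * [B,A;J])`. -/
def mcRev {R : Type*} [Ring R] (A B : R) : List ℕ → R
  | [] => 1
  | j :: rest => (adRight A)^[j] (B * mcRev A B rest)

/-- The multiple commutator `[B,A;J]` for `J = [j₁,…,j_r]` in the natural order. -/
def multiComm {R : Type*} [Ring R] (A B : R) (J : List ℕ) : R := mcRev A B J.reverse

/-- `V_m` : the (finite) set of nonempty vectors `J = (j₁,…,j_r)` of nonnegative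
integers with `j₁+…+j_r + r = m`. -/
def Vm (m : ℕ) : Set (List ℕ) := {J | J ≠ [] ∧ J.sum + J.length = m}

/-- `X_m = Σ_{J ∈ V_m} [B,A;J]`. -/
noncomputable def Xm {R : Type*} [Ring R] (A B : R) (m : ℕ) : R :=
  ∑ᶠ J ∈ Vm m, multiComm A B J

/-- prepend 0 -/
def g0 (J : List ℕ) : List ℕ := 0 :: J

/-- increment head -/
def g1 : List ℕ → List ℕ
  | [] => []
  | j :: t => (j + 1) :: t

/-- Finset version of `Vm (n+1)`. -/
def Fm : ℕ → Finset (List ℕ)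
  | 0 => {[0]}
  | n + 1 => (Fm n).image g0 ∪ (Fm n).image g1

lemma Fm_coe (n : ℕ) : (Fm n : Set (List ℕ)) = Vm (n + 1) := by
  induction n with
  | zero =>
    ext J
    simp only [Fm, Finset.coe_singleton, Set.mem_singleton_iff, Vm, Set.mem_setOf_eq]
    constructor
    · rintro rfl; simp
    · rintro ⟨hne, hsum⟩
      cases J with
      | nil => exact absurd rfl hne
      | cons j t =>
        simp only [List.sum_cons, List.length_cons] at hsum
        have hj : j = 0 := by omega
        have ht : t.length = 0 := by omega
        have : t = [] := List.length_eq_zero_iff.mp ht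
        simp [hj, this]
  | succ n ih =>
    ext J
    simp only [Fm, Finset.coe_union, Finset.coe_image, Set.mem_union, Set.mem_image,
      Finset.mem_coe, Vm, Set.mem_setOf_eq]
    have ihm : ∀ K, K ∈ Fm n ↔ (K ≠ [] ∧ K.sum + K.length = n + 1) := by
      intro K
      rw [← Finset.mem_coe, ih]; rfl
    constructor
    · rintro (⟨K, hK, rfl⟩ | ⟨K, hK, rfl⟩)
      · obtain ⟨hne, hsum⟩ := (ihm K).mp hK
        refine ⟨by simp [g0], ?_⟩
        simp [g0]; omega
      · obtain ⟨hne, hsum⟩ := (ihm K).mp hK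
        cases K with
        | nil => exact absurd rfl hne
        | cons j t =>
          refine ⟨by simp [g1], ?_⟩
          simp only [List.sum_cons, List.length_cons] at hsum ⊢
          simp [g1]; omega
    · rintro ⟨hne, hsum⟩
      cases J with
      | nil => exact absurd rfl hne
      | cons j t =>
        simp only [List.sum_cons, List.length_cons] at hsum
        cases j with
        | zero =>
          left
          refine ⟨t, (ihm t).mpr ⟨?_, by omega⟩, rfl⟩
          rintro rfl
          simp only [List.sum_nil, List.length_nil] at hsum
          omega
        | succ j =>
          right
          refine ⟨j :: t, (ihm (j :: t)).mpr ⟨by simp, ?_⟩, rfl⟩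
          · simp only [List.sum_cons, List.length_cons]; omega

lemma Fm_nonempty_mem {n : ℕ} {J : List ℕ} (h : J ∈ Fm n) : J ≠ [] := by
  have : J ∈ (Fm n : Set (List ℕ)) := h
  rw [Fm_coe] at this
  exact this.1

lemma Fm_reverse (n : ℕ) : (Fm n).image List.reverse = Fm n := by
  apply Finset.coe_injective
  rw [Finset.coe_image, Fm_coe]
  ext J
  simp only [Set.mem_image, Vm, Set.mem_setOf_eq]
  constructor
  · rintro ⟨K, ⟨hne, hs⟩, rfl⟩
    refine ⟨by simpa using hne, by rw [List.sum_reverse, List.length_reverse]; exact hs⟩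
  · rintro ⟨hne, hs⟩
    exact ⟨J.reverse, ⟨by simpa using hne,
      by rw [List.sum_reverse, List.length_reverse]; exact hs⟩, by simp⟩

lemma Xm_eq_sum {R : Type*} [Ring R] (A B : R) (n : ℕ) :
    Xm A B (n + 1) = ∑ J ∈ Fm n, mcRev A B J := by
  have h1 : Xm A B (n + 1) = ∑ J ∈ Fm n, multiComm A B J := by
    rw [Xm, ← Fm_coe, finsum_mem_coe_finset]
  rw [h1]
  calc ∑ J ∈ Fm n, multiComm A B J
      = ∑ J ∈ Fm n, mcRev A B J.reverse := rfl
    _ = ∑ J ∈ (Fm n).image List.reverse, mcRev A B J := by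
        rw [Finset.sum_image (by intro a _ b _ h; exact List.reverse_injective h)]
    _ = ∑ J ∈ Fm n, mcRev A B J := by rw [Fm_reverse]

theorem Xm_one_and_recurrence {R : Type*} [Ring R] (A B : R) :
    Xm A B 1 = B ∧
    ∀ m : ℕ, 2 ≤ m →
      Xm A B m = B * Xm A B (m - 1) + (Xm A B (m - 1) * A - A * Xm A B (m - 1)) := by
  constructor
  · have := Xm_eq_sum A B 0
    simp only [Fm, Finset.sum_singleton] at this
    simpa [mcRev] using this
  · intro m hm
    obtain ⟨n, rfl⟩ : ∃ n, m = n + 2 := ⟨m - 2, by omega⟩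
    have hstep : (n + 2) - 1 = n + 1 := rfl
    rw [hstep, Xm_eq_sum A B (n + 1), Xm_eq_sum A B n]
    have hdisj : Disjoint ((Fm n).image g0) ((Fm n).image g1) := by
      rw [Finset.disjoint_left]
      rintro J hJ0 hJ1
      simp only [Finset.mem_image] at hJ0 hJ1
      obtain ⟨K, hK, rfl⟩ := hJ0
      obtain ⟨K', hK', hE⟩ := hJ1
      cases K' with
      | nil => exact absurd rfl (Fm_nonempty_mem hK')
      | cons j t => simp [g0, g1] at hE
    show ∑ J ∈ (Fm n).image g0 ∪ (Fm n).image g1, mcRev A B J = _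
    rw [Finset.sum_union hdisj]
    rw [Finset.sum_image (g := g0) (by intro a _ b _ h; simpa [g0] using h)]
    have hinj1 : ∀ a ∈ Fm n, ∀ b ∈ Fm n, g1 a = g1 b → a = b := by
      intro a ha b hb h
      cases a with
      | nil => exact absurd rfl (Fm_nonempty_mem ha)
      | cons j t =>
        cases b with
        | nil => exact absurd rfl (Fm_nonempty_mem hb)
        | cons j' t' =>
          simp only [g1, List.cons.injEq] at h
          obtain ⟨h1, h2⟩ := h
          subst h2
          have : j = j' := by omega
          rw [this]
    rw [Finset.sum_image (g := g1) hinj1]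
    have h0 : ∀ J ∈ Fm n, mcRev A B (g0 J) = B * mcRev A B J := by
      intro J _
      simp [g0, mcRev]
    have h1 : ∀ J ∈ Fm n, mcRev A B (g1 J) =
        mcRev A B J * A - A * mcRev A B J := by
      intro J hJ
      cases J with
      | nil => exact absurd rfl (Fm_nonempty_mem hJ)
      | cons j t =>
        show mcRev A B ((j+1) :: t) = _
        simp only [mcRev, Function.iterate_succ_apply']
        rfl
    calc ∑ x ∈ Fm n, mcRev A B (g0 x) + ∑ x ∈ Fm n, mcRev A B (g1 x)
        = (∑ x ∈ Fm n, B * mcRev A B x) +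
          ∑ x ∈ Fm n, (mcRev A B x * A - A * mcRev A B x) := by
          rw [Finset.sum_congr rfl h0, Finset.sum_congr rfl h1]
      _ = B * (∑ J ∈ Fm n, mcRev A B J) +
          ((∑ J ∈ Fm n, mcRev A B J) * A - A * ∑ J ∈ Fm n, mcRev A B J) := by
          rw [← Finset.mul_sum, Finset.sum_sub_distrib, ← Finset.sum_mul, ← Finset.mul_sum]
end

section
/- Let R be an associative unital ring and A, B ∈ R. For m ≥ 1 let X_m = Σ_{J∈V_m} [B,A;J] be the sum of multiple commutators over the set V_m. Then for every m ≥ 1, X_m = Σ_{k=0}^{m} (−1)^k · C(m,k) · (A−B)^k · A^{m−k}, where C(m,k) is the binomial coefficient. -/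
/-- Finset of lists `L` with `L.sum + L.length = m`. -/
def Fs : ℕ → Finset (List ℕ)
  | 0 => {[]}
  | (m+1) => (Finset.range (m+1)).biUnion
      (fun j => (Fs (m-j)).image (fun L => j :: L))

lemma mem_Fs : ∀ (m : ℕ) (L : List ℕ), L ∈ Fs m ↔ L.sum + L.length = m := by
  intro m
  induction m using Nat.strong_induction_on with
  | _ m ih =>
    intro L
    match m with
    | 0 =>
      simp only [Fs, Finset.mem_singleton]
      cases L <;> simp
    | (m+1) =>
      simp only [Fs, Finset.mem_biUnion, Finset.mem_image, Finset.mem_range]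
      constructor
      · rintro ⟨j, hj, L', hL', rfl⟩
        have := (ih (m - j) (by omega) L').mp hL'
        simp only [List.sum_cons, List.length_cons]
        omega
      · intro h
        cases L with
        | nil => simp at h
        | cons j L' =>
          simp only [List.sum_cons, List.length_cons] at h
          refine ⟨j, by omega, L', ?_, rfl⟩
          rw [ih (m - j) (by omega)]
          omega

section Ring

variable {R : Type*} [Ring R] (A B : R)

/-- `Z m = Σ_{L ∈ Fs m} mcRev A B L`. -/
def Z (m : ℕ) : R := ∑ L ∈ Fs m, mcRev A B L

lemma adRight_sum {ι : Type*} (s : Finset ι) (f : ι → R) :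
    adRight A (∑ i ∈ s, f i) = ∑ i ∈ s, adRight A (f i) := by
  simp [adRight, Finset.sum_mul, Finset.mul_sum, Finset.sum_sub_distrib]

lemma iterate_adRight_sum (j : ℕ) {ι : Type*} (s : Finset ι) (f : ι → R) :
    (adRight A)^[j] (∑ i ∈ s, f i) = ∑ i ∈ s, (adRight A)^[j] (f i) := by
  induction j generalizing f with
  | zero => simp
  | succ j ihj =>
    rw [Function.iterate_succ_apply, adRight_sum, ihj]
    exact Finset.sum_congr rfl fun i _ => (Function.iterate_succ_apply _ _ _).symm

lemma Z_zero : Z A B 0 = 1 := by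
  simp [Z, Fs, mcRev]

lemma Z_succ (m : ℕ) :
    Z A B (m+1) = ∑ j ∈ Finset.range (m+1), (adRight A)^[j] (B * Z A B (m-j)) := by
  rw [Z, Fs, Finset.sum_biUnion]
  · refine Finset.sum_congr rfl fun j _ => ?_
    have hinj : ∀ x ∈ Fs (m - j), ∀ y ∈ Fs (m - j), j :: x = j :: y → x = y := by
      intro a _ b _ h
      simpa using h
    rw [Finset.sum_image hinj]
    rw [Z, Finset.mul_sum, iterate_adRight_sum]
    rfl
  · intro a _ b _ hab
    simp only [Finset.disjoint_left, Finset.mem_image]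
    rintro L ⟨L1, _, rfl⟩ ⟨L2, _, h⟩
    have hba : b = a ∧ L2 = L1 := by simpa using h
    exact hab hba.1.symm

lemma Z_rec (m : ℕ) : Z A B (m+1) = Z A B m * A - (A - B) * Z A B m := by
  cases m with
  | zero =>
    rw [Z_succ, Finset.sum_range_succ, Finset.sum_range_zero, zero_add]
    simp only [Function.iterate_zero_apply, Nat.sub_zero, Z_zero, mul_one]
    noncomm_ring
  | succ m' =>
    rw [Z_succ, Finset.sum_range_succ']
    have h1 : ∀ j : ℕ, (adRight A)^[j+1] (B * Z A B (m' + 1 - (j+1)))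
        = adRight A ((adRight A)^[j] (B * Z A B (m' - j))) := by
      intro j
      have e : m' + 1 - (j+1) = m' - j := by omega
      rw [e, Function.iterate_succ_apply']
    simp only [h1, Function.iterate_zero_apply, Nat.sub_zero]
    rw [← adRight_sum, ← Z_succ]
    simp only [adRight]
    noncomm_ring

/-- The binomial-sum closed form. -/
def F (m : ℕ) : R :=
  ∑ k ∈ Finset.range (m + 1),
    (-1 : R) ^ k * (m.choose k : R) * (A - B) ^ k * A ^ (m - k)

lemma F_zero : F A B 0 = 1 := by simp [F]

lemma F_rec (m : ℕ) : F A B (m+1) = F A B m * A - (A - B) * F A B m := by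
  have key : F A B (m+1)
      = A ^ (m+1) + ∑ k ∈ Finset.range (m+1),
          (-1 : R) ^ (k+1) * ((m+1).choose (k+1) : R) * (A - B) ^ (k+1) * A ^ (m - k) := by
    rw [F, Finset.sum_range_succ']
    have : ∀ k ∈ Finset.range (m+1),
        (-1 : R) ^ (k+1) * ((m+1).choose (k+1) : R) * (A - B) ^ (k+1) * A ^ (m + 1 - (k+1))
        = (-1 : R) ^ (k+1) * ((m+1).choose (k+1) : R) * (A - B) ^ (k+1) * A ^ (m - k) := by
      intro k _
      congr 2
      omega
    rw [Finset.sum_congr rfl this]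
    simp [add_comm]
  rw [key]
  have hcom : ∀ (k n : ℕ) (x : R), x * ((-1 : R) ^ k * (n : R)) = ((-1 : R) ^ k * (n : R)) * x :=
    fun k n x => (((Commute.neg_one_right x).pow_right k).mul_right
      (Nat.cast_commute n x).symm).eq
  have split : ∀ k : ℕ,
      (-1 : R) ^ (k+1) * ((m+1).choose (k+1) : R) * (A - B) ^ (k+1) * A ^ (m - k)
      = -((A - B) * ((-1 : R) ^ k * (m.choose k : R) * (A - B) ^ k * A ^ (m - k)))
        + (-1 : R) ^ (k+1) * (m.choose (k+1) : R) * (A - B) ^ (k+1) * A ^ (m - k) := by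
    intro k
    have e1 : -((A - B) * ((-1 : R) ^ k * (m.choose k : R) * (A - B) ^ k * A ^ (m - k)))
        = (-1 : R) ^ (k+1) * (m.choose k : R) * (A - B) ^ (k+1) * A ^ (m - k) := by
      have a1 : (A - B) * ((-1 : R) ^ k * (m.choose k : R) * (A - B) ^ k * A ^ (m - k))
          = ((A - B) * ((-1 : R) ^ k * (m.choose k : R))) * ((A - B) ^ k * A ^ (m - k)) := by
        noncomm_ring
      rw [a1, hcom k (m.choose k) (A - B)]
      have a2 : ((-1 : R) ^ k * (m.choose k : R)) * (A - B) * ((A - B) ^ k * A ^ (m - k))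
          = ((-1 : R) ^ k * (m.choose k : R)) * ((A - B) * (A - B) ^ k) * A ^ (m - k) := by
        noncomm_ring
      rw [a2, ← pow_succ', pow_succ (-1 : R)]
      noncomm_ring
    rw [Nat.choose_succ_succ, Nat.cast_add, e1]
    simp only [Nat.succ_eq_add_one]
    noncomm_ring
  rw [Finset.sum_congr rfl (fun k _ => split k), Finset.sum_add_distrib]
  have s1 : ∑ k ∈ Finset.range (m+1),
      -((A - B) * ((-1 : R) ^ k * (m.choose k : R) * (A - B) ^ k * A ^ (m - k)))
      = -((A - B) * F A B m) := by
    rw [F, Finset.mul_sum, ← Finset.sum_neg_distrib]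
  have s2 : ∑ k ∈ Finset.range (m+1),
      (-1 : R) ^ (k+1) * (m.choose (k+1) : R) * (A - B) ^ (k+1) * A ^ (m - k)
      = F A B m * A - A ^ (m+1) := by
    rw [Finset.sum_range_succ, Nat.choose_succ_self]
    simp only [Nat.cast_zero, mul_zero, zero_mul, add_zero]
    have : ∀ k ∈ Finset.range m,
        (-1 : R) ^ (k+1) * (m.choose (k+1) : R) * (A - B) ^ (k+1) * A ^ (m - k)
        = ((-1 : R) ^ (k+1) * (m.choose (k+1) : R) * (A - B) ^ (k+1) * A ^ (m - (k+1))) * A := by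
      intro k hk
      rw [Finset.mem_range] at hk
      have e : m - k = (m - (k+1)) + 1 := by omega
      rw [e, pow_succ A (m - (k+1))]
      noncomm_ring
    rw [Finset.sum_congr rfl this, ← Finset.sum_mul]
    have : ∑ k ∈ Finset.range m,
        (-1 : R) ^ (k+1) * (m.choose (k+1) : R) * (A - B) ^ (k+1) * A ^ (m - (k+1))
        = F A B m - A ^ m := by
      rw [F, Finset.sum_range_succ']
      simp
    rw [this, sub_mul, ← pow_succ]
  rw [s1, s2]
  noncomm_ring

lemma Z_eq_F (m : ℕ) : Z A B m = F A B m := by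
  induction m with
  | zero => rw [Z_zero, F_zero]
  | succ m ih => rw [Z_rec, F_rec, ih]

end Ring

theorem Xm_closed_formula {R : Type*} [Ring R] (A B : R) :
    ∀ m : ℕ, 1 ≤ m →
      Xm A B m =
        ∑ k ∈ Finset.range (m + 1),
          (-1 : R) ^ k * (m.choose k : R) * (A - B) ^ k * A ^ (m - k) := by
  intro m hm
  have hset : Vm m = ↑(Fs m) := by
    ext L
    simp only [Vm, Set.mem_setOf_eq, Finset.coe_sort_coe, Finset.mem_coe, mem_Fs]
    constructor
    · rintro ⟨-, h⟩; exact h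
    · intro h
      refine ⟨?_, h⟩
      rintro rfl
      simp at h
      omega
  have h1 : Xm A B m = ∑ J ∈ Fs m, multiComm A B J := by
    rw [Xm, hset, finsum_mem_coe_finset]
  have h2 : ∑ J ∈ Fs m, multiComm A B J = Z A B m := by
    rw [Z]
    refine Finset.sum_nbij' (fun L => L.reverse) (fun L => L.reverse) ?_ ?_ ?_ ?_ ?_
    · intro L hL
      rw [mem_Fs, List.sum_reverse, List.length_reverse]
      exact (mem_Fs m L).mp hL
    · intro L hL
      rw [mem_Fs, List.sum_reverse, List.length_reverse]
      exact (mem_Fs m L).mp hL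
    · intro L _; simp
    · intro L _; simp
    · intro L _; rfl
  have h3 : (∑ k ∈ Finset.range (m + 1),
      (-1 : R) ^ k * (m.choose k : R) * (A - B) ^ k * A ^ (m - k)) = F A B m := rfl
  rw [h1, h2, h3, Z_eq_F]
end

section
/- Let R be an associative unital ring and A, B ∈ R. For m ≥ 2 let V_m^0 denote the set of vectors in V_m whose last entry is 0. Then Σ_{J∈V_m∖V_m^0} [B,A;J] = [X_{m−1}, A] = X_{m−1}·A − A·X_{m−1}, where X_{m−1} = Σ_{J∈V_{m−1}} [B,A;J]. -/
/-- `V_m^0` : the set of vectors in `V_m` whose last entry is `0`. -/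
def Vm0 (m : ℕ) : Set (List ℕ) := {J | J ∈ Vm m ∧ J.getLast? = some 0}

open List

theorem List.modifyLast_injective {α : Type*} {f : α → α} (hf : Function.Injective f) :
    Function.Injective (modifyLast f) := by
  intro K L h
  rcases K.eq_nil_or_concat' with rfl | ⟨s, a, rfl⟩ <;>
    rcases L.eq_nil_or_concat' with rfl | ⟨t, b, rfl⟩
  · rfl
  · rw [modifyLast_concat] at h
    simp [modifyLast, modifyLast.go] at h
  · rw [modifyLast_concat] at h
    simp [modifyLast, modifyLast.go] at h
  · rw [modifyLast_concat, modifyLast_concat] at h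
    obtain ⟨rfl, hab⟩ := append_inj' h rfl
    rw [hf (singleton_injective hab)]

theorem Vm_finite (m : ℕ) : (Vm m).Finite := by
  refine (Set.finite_range fun c : Composition m => c.blocks.map (· - 1)).subset ?_
  rintro J ⟨-, hJ⟩
  refine ⟨⟨J.map (· + 1), by simp, by simp [sum_map_add, hJ]⟩, ?_⟩
  simp [map_map, Function.comp_def]

theorem concat_mem_Vm {t : List ℕ} {j m : ℕ} :
    t ++ [j] ∈ Vm m ↔ t.sum + t.length + j + 1 = m := by
  simp [Vm, ← add_assoc, add_right_comm _ j]

theorem concat_mem_Vm0 {t : List ℕ} {j m : ℕ} : t ++ [j] ∈ Vm0 m ↔ t ++ [j] ∈ Vm m ∧ j = 0 := by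
  simp [Vm0]

theorem modifyLast_succ_image_Vm (n : ℕ) :
    modifyLast Nat.succ '' Vm n = Vm (n + 1) \ Vm0 (n + 1) := by
  apply Set.Subset.antisymm
  · rintro _ ⟨J, hJ, rfl⟩
    obtain ⟨t, j, rfl⟩ := J.eq_nil_or_concat'.resolve_left hJ.1
    rw [concat_mem_Vm] at hJ
    rw [modifyLast_concat, Set.mem_sdiff, concat_mem_Vm0, concat_mem_Vm]
    omega
  · rintro K ⟨hK, hK0⟩
    obtain ⟨t, k, rfl⟩ := K.eq_nil_or_concat'.resolve_left hK.1
    obtain ⟨j, rfl⟩ : ∃ j, k = j + 1 :=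
      Nat.exists_eq_succ_of_ne_zero fun hk => hK0 (concat_mem_Vm0.mpr ⟨hK, hk⟩)
    rw [concat_mem_Vm] at hK
    exact ⟨t ++ [j], concat_mem_Vm.mpr (by omega), modifyLast_concat _ _ _⟩

theorem multiComm_concat {R : Type*} [Ring R] (A B : R) (t : List ℕ) (j : ℕ) :
    multiComm A B (t ++ [j]) = (adRight A)^[j] (B * multiComm A B t) := by
  simp [multiComm, mcRev]

theorem multiComm_modifyLast_succ {R : Type*} [Ring R] (A B : R) {J : List ℕ} (hJ : J ≠ []) :
    multiComm A B (J.modifyLast Nat.succ) = adRight A (multiComm A B J) := by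
  obtain ⟨t, j, rfl⟩ := J.eq_nil_or_concat'.resolve_left hJ
  rw [modifyLast_concat, multiComm_concat, multiComm_concat, Function.iterate_succ_apply']

theorem sum_over_Vm_diff_Vm0 {R : Type*} [Ring R] (A B : R) :
    ∀ m : ℕ, 2 ≤ m →
      (∑ᶠ J ∈ Vm m \ Vm0 m, multiComm A B J) =
        Xm A B (m - 1) * A - A * Xm A B (m - 1) := by
  intro m hm
  obtain ⟨n, rfl⟩ : ∃ n, m = n + 1 := ⟨m - 1, by omega⟩
  rw [Nat.add_sub_cancel, ← modifyLast_succ_image_Vm,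
    finsum_mem_image (modifyLast_injective Nat.succ_injective).injOn, Xm,
    finsum_mem_mul' _ _ (Vm_finite n), mul_finsum_mem' _ _ (Vm_finite n),
    ← finsum_mem_sub_distrib _ _ (Vm_finite n)]
  exact finsum_mem_congr rfl fun J hJ => multiComm_modifyLast_succ A B hJ.1
end

section
/- Let ρ > 0 be a real number and let p, q, m be natural numbers with p ≤ q and q ≤ m − 1. Then the function (ξ₁,ξ₂) ↦ ξ₁^{2(q−p)} · ξ₂^{2p} · ((ξ₁² + ξ₂²)/ρ + 1)^{−(m+1)} is integrable on ℝ², and ∫_{ℝ²} ξ₁^{2(q−p)} ξ₂^{2p} ((ξ₁²+ξ₂²)/ρ + 1)^{−(m+1)} dξ₁ dξ₂ = ρ^{q+1} · Γ(q−p+1/2) · Γ(p+1/2) · Γ(m−q) / Γ(m+1). -/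
/-!
Integrating out `ξ₂` and then `ξ₁`, each step is a one-dimensional integral
`∫ y ^ (2n) (c + y²) ^ (-s) dy`. The substitutions `y = √c z`, `z² = v` and `v = w / (1 - w)`
turn it into Euler's Beta integral, so it equals `c ^ (n + 1/2 - s) B(n + 1/2, s - n - 1/2)`.
In the product of the two Beta values the middle Gamma factor cancels.
-/

open MeasureTheory Real Set

-- `ProbabilityTheory.beta a b` is Euler's `B(a, b) = Γ a Γ b / Γ (a + b)`.
open ProbabilityTheory (beta)

lemma ofReal_rpow_mul_one_sub_rpow {a b x : ℝ} (hx : x ∈ Icc 0 1) :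
    ((x ^ (a - 1) * (1 - x) ^ (b - 1) : ℝ) : ℂ) =
      (x : ℂ) ^ ((a : ℂ) - 1) * (1 - (x : ℂ)) ^ ((b : ℂ) - 1) := by
  rw [Complex.ofReal_mul, Complex.ofReal_cpow hx.1, Complex.ofReal_cpow (sub_nonneg.2 hx.2)]
  push_cast
  ring

lemma intervalIntegrable_rpow_mul_one_sub_rpow {a b : ℝ} (ha : 0 < a) (hb : 0 < b) :
    IntervalIntegrable (fun x : ℝ => x ^ (a - 1) * (1 - x) ^ (b - 1)) volume 0 1 := by
  have h := Complex.betaIntegral_convergent (u := a) (v := b) (by simpa) (by simpa)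
  rw [intervalIntegrable_iff_integrableOn_Ioc_of_le zero_le_one] at h ⊢
  refine (integrableOn_congr_fun (fun x hx => ?_) measurableSet_Ioc).mp h.re
  rw [← ofReal_rpow_mul_one_sub_rpow (Ioc_subset_Icc_self hx)]
  exact Complex.ofReal_re _

lemma intervalIntegral_rpow_mul_one_sub_rpow {a b : ℝ} (ha : 0 < a) (hb : 0 < b) :
    ∫ x in (0 : ℝ)..1, x ^ (a - 1) * (1 - x) ^ (b - 1) = beta a b := by
  have h : Complex.betaIntegral a b = ∫ x in (0 : ℝ)..1, x ^ (a - 1) * (1 - x) ^ (b - 1) := by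
    rw [← intervalIntegral.integral_ofReal]
    refine intervalIntegral.integral_congr fun x hx => ?_
    rw [uIcc_of_le zero_le_one] at hx
    exact (ofReal_rpow_mul_one_sub_rpow hx).symm
  rw [ProbabilityTheory.beta_eq_betaIntegralReal a b ha hb, h, Complex.ofReal_re]

lemma image_div_one_sub_Ioo : (fun w : ℝ => w / (1 - w)) '' Ioo 0 1 = Ioi 0 := by
  ext v
  constructor
  · rintro ⟨w, ⟨hw0, hw1⟩, rfl⟩
    exact div_pos hw0 (sub_pos.2 hw1)
  · intro hv
    have hv : (0 : ℝ) < v := hv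
    refine ⟨v / (1 + v), ⟨by positivity, (div_lt_one (by positivity)).2 (by linarith)⟩, ?_⟩
    field_simp
    ring

lemma injOn_div_one_sub : InjOn (fun w : ℝ => w / (1 - w)) (Iio 1) := by
  intro x hx y hy hxy
  have hx : 1 - x ≠ 0 := (sub_pos.2 hx).ne'
  have hy : 1 - y ≠ 0 := (sub_pos.2 hy).ne'
  field_simp at hxy
  linarith

lemma hasDerivAt_div_one_sub {w : ℝ} (hw : w ≠ 1) :
    HasDerivAt (fun w : ℝ => w / (1 - w)) ((1 - w) ^ 2)⁻¹ w := by
  refine ((hasDerivAt_id' w).div ((hasDerivAt_id' w).const_sub 1)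
    (sub_ne_zero.2 hw.symm)).congr_deriv ?_
  ring

lemma abs_deriv_smul_comp_div_one_sub {a b w : ℝ} (hw : w ∈ Ioo 0 1) :
    |((1 - w) ^ 2)⁻¹| • ((w / (1 - w)) ^ (a - 1) * (1 + w / (1 - w)) ^ (-(a + b))) =
      w ^ (a - 1) * (1 - w) ^ (b - 1) := by
  obtain ⟨hw0, hw1⟩ := hw
  have h1w : 0 < 1 - w := sub_pos.2 hw1
  have hsum : 1 + w / (1 - w) = (1 - w)⁻¹ := by field_simp; ring
  rw [smul_eq_mul, abs_of_pos (by positivity), hsum, div_rpow hw0.le h1w.le, inv_rpow h1w.le,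
    rpow_neg h1w.le, inv_inv, show a + b = 2 + (a - 1) + (b - 1) by ring,
    rpow_add h1w, rpow_add h1w, rpow_two]
  field_simp

lemma integrableOn_Ioi_rpow_mul_one_add_rpow_neg {a b : ℝ} (ha : 0 < a) (hb : 0 < b) :
    IntegrableOn (fun v : ℝ => v ^ (a - 1) * (1 + v) ^ (-(a + b))) (Ioi 0) := by
  rw [← image_div_one_sub_Ioo,
    integrableOn_image_iff_integrableOn_abs_deriv_smul measurableSet_Ioo
      (fun w hw => (hasDerivAt_div_one_sub hw.2.ne).hasDerivWithinAt)
      (injOn_div_one_sub.mono fun w hw => hw.2)]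
  refine (integrableOn_congr_fun (fun w hw => abs_deriv_smul_comp_div_one_sub hw)
    measurableSet_Ioo).mpr ?_
  exact ((intervalIntegrable_iff_integrableOn_Ioo_of_le zero_le_one).mp
    (intervalIntegrable_rpow_mul_one_sub_rpow ha hb))

lemma integral_Ioi_rpow_mul_one_add_rpow_neg {a b : ℝ} (ha : 0 < a) (hb : 0 < b) :
    ∫ v in Ioi (0 : ℝ), v ^ (a - 1) * (1 + v) ^ (-(a + b)) = beta a b := by
  rw [← image_div_one_sub_Ioo,
    integral_image_eq_integral_abs_deriv_smul measurableSet_Ioo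
      (fun w hw => (hasDerivAt_div_one_sub hw.2.ne).hasDerivWithinAt)
      (injOn_div_one_sub.mono fun w hw => hw.2),
    setIntegral_congr_fun measurableSet_Ioo fun w hw => abs_deriv_smul_comp_div_one_sub hw,
    ← integral_Ioc_eq_integral_Ioo, ← intervalIntegral.integral_of_le zero_le_one,
    intervalIntegral_rpow_mul_one_sub_rpow ha hb]

lemma two_mul_rpow_smul_comp_rpow_two (n : ℕ) (s : ℝ) {x : ℝ} (hx : 0 < x) :
    (2 * x ^ ((2 : ℝ) - 1)) •
        ((x ^ (2 : ℝ)) ^ ((n : ℝ) + 1 / 2 - 1) * (1 + x ^ (2 : ℝ)) ^ (-s)) =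
      2 * (x ^ (2 * n) * (1 + x ^ 2) ^ (-s)) := by
  have hpow : (x ^ (2 : ℝ)) ^ ((n : ℝ) + 1 / 2 - 1) = x ^ (2 * n) / x := by
    rw [← rpow_mul hx.le, show (2 : ℝ) * ((n : ℝ) + 1 / 2 - 1) = ((2 * n : ℕ) : ℝ) - 1 by
      push_cast; ring, rpow_sub hx, rpow_one, rpow_natCast]
  rw [smul_eq_mul, hpow, rpow_two, show (2 : ℝ) - 1 = 1 by norm_num, rpow_one]
  field_simp

lemma integrableOn_Ioi_pow_mul_one_add_sq_rpow_neg (n : ℕ) {b : ℝ} (hb : 0 < b) :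
    IntegrableOn (fun x : ℝ => x ^ (2 * n) * (1 + x ^ 2) ^ (-((n : ℝ) + 1 / 2 + b)))
      (Ioi 0) := by
  have h := (integrableOn_Ioi_comp_rpow_iff _ two_ne_zero).mpr
    (integrableOn_Ioi_rpow_mul_one_add_rpow_neg (a := (n : ℝ) + 1 / 2) (by positivity) hb)
  rw [abs_two] at h
  replace h := (integrableOn_congr_fun (fun x hx => two_mul_rpow_smul_comp_rpow_two n _ hx)
    measurableSet_Ioi).mp h
  exact (integrable_const_mul_iff (isUnit_iff_ne_zero.mpr two_ne_zero) _).mp h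

lemma integral_Ioi_pow_mul_one_add_sq_rpow_neg (n : ℕ) {b : ℝ} (hb : 0 < b) :
    ∫ x in Ioi (0 : ℝ), x ^ (2 * n) * (1 + x ^ 2) ^ (-((n : ℝ) + 1 / 2 + b)) =
      beta ((n : ℝ) + 1 / 2) b / 2 := by
  have h := integral_comp_rpow_Ioi_of_pos (p := 2) two_pos
    (g := fun v : ℝ => v ^ ((n : ℝ) + 1 / 2 - 1) * (1 + v) ^ (-((n : ℝ) + 1 / 2 + b)))
  rw [integral_Ioi_rpow_mul_one_add_rpow_neg (by positivity) hb,
    setIntegral_congr_fun measurableSet_Ioi fun x hx => two_mul_rpow_smul_comp_rpow_two n _ hx,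
    integral_const_mul] at h
  linarith

lemma MeasureTheory.IntegrableOn.integrable_comp_abs {E : Type*} [NormedAddCommGroup E]
    {f : ℝ → E} (hf : IntegrableOn f (Ioi 0)) : Integrable (fun x => f |x|) := by
  have hIoi : IntegrableOn (fun x => f |x|) (Ioi 0) :=
    (integrableOn_congr_fun (fun x hx => by rw [abs_of_pos hx]) measurableSet_Ioi).mpr hf
  have hIic : IntegrableOn (fun x => f |x|) (Iic 0) := by
    let neg : MeasurableEmbedding fun x : ℝ => -x := (Homeomorph.neg ℝ).measurableEmbedding
    rw [← Measure.map_neg_eq_self (volume : Measure ℝ), neg.integrableOn_map_iff]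
    simp_rw [Function.comp_def, abs_neg, neg_preimage, neg_Iic, neg_zero]
    exact (integrableOn_Ici_iff_integrableOn_Ioi (hb := enorm_ne_top)).2 hIoi
  rw [← integrableOn_univ, ← Iic_union_Ioi (a := (0 : ℝ))]
  exact hIic.union hIoi

lemma pow_mul_one_add_sq_rpow_abs (n : ℕ) (s x : ℝ) :
    |x| ^ (2 * n) * (1 + |x| ^ 2) ^ (-s) = x ^ (2 * n) * (1 + x ^ 2) ^ (-s) := by
  rw [pow_mul, pow_mul, sq_abs]

lemma integrable_pow_mul_one_add_sq_rpow_neg (n : ℕ) {b : ℝ} (hb : 0 < b) :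
    Integrable (fun x : ℝ => x ^ (2 * n) * (1 + x ^ 2) ^ (-((n : ℝ) + 1 / 2 + b))) := by
  simpa only [pow_mul_one_add_sq_rpow_abs] using
    (integrableOn_Ioi_pow_mul_one_add_sq_rpow_neg n hb).integrable_comp_abs

lemma integral_pow_mul_one_add_sq_rpow_neg (n : ℕ) {b : ℝ} (hb : 0 < b) :
    ∫ x : ℝ, x ^ (2 * n) * (1 + x ^ 2) ^ (-((n : ℝ) + 1 / 2 + b)) =
      beta ((n : ℝ) + 1 / 2) b := by
  have h := integral_comp_abs
    (f := fun x : ℝ => x ^ (2 * n) * (1 + x ^ 2) ^ (-((n : ℝ) + 1 / 2 + b)))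
  simp only [pow_mul_one_add_sq_rpow_abs] at h
  rw [h, integral_Ioi_pow_mul_one_add_sq_rpow_neg n hb]
  ring

lemma pow_mul_add_sq_rpow_neg_comp_sqrt_mul {c : ℝ} (hc : 0 < c) (n : ℕ) (s z : ℝ) :
    (√c * z) ^ (2 * n) * (c + (√c * z) ^ 2) ^ (-s) =
      c ^ n * c ^ (-s) * (z ^ (2 * n) * (1 + z ^ 2) ^ (-s)) := by
  rw [mul_pow, mul_pow, sq_sqrt hc.le, pow_mul, sq_sqrt hc.le,
    show c + c * z ^ 2 = c * (1 + z ^ 2) by ring, mul_rpow hc.le (by positivity), pow_mul]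
  ring

lemma integrable_pow_mul_add_sq_rpow_neg (n : ℕ) {b c : ℝ} (hb : 0 < b) (hc : 0 < c) :
    Integrable (fun y : ℝ => y ^ (2 * n) * (c + y ^ 2) ^ (-((n : ℝ) + 1 / 2 + b))) := by
  rw [← integrable_comp_mul_left_iff _ (sqrt_pos.2 hc).ne']
  simp only [pow_mul_add_sq_rpow_neg_comp_sqrt_mul hc]
  exact (integrable_pow_mul_one_add_sq_rpow_neg n hb).const_mul _

lemma integral_pow_mul_add_sq_rpow_neg (n : ℕ) {b c : ℝ} (hb : 0 < b) (hc : 0 < c) :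
    ∫ y : ℝ, y ^ (2 * n) * (c + y ^ 2) ^ (-((n : ℝ) + 1 / 2 + b)) =
      c ^ (-b) * beta ((n : ℝ) + 1 / 2) b := by
  have h := Measure.integral_comp_mul_left
    (fun y : ℝ => y ^ (2 * n) * (c + y ^ 2) ^ (-((n : ℝ) + 1 / 2 + b))) √c
  simp only [pow_mul_add_sq_rpow_neg_comp_sqrt_mul hc, integral_const_mul,
    integral_pow_mul_one_add_sq_rpow_neg n hb, smul_eq_mul, abs_inv,
    abs_of_pos (sqrt_pos.2 hc)] at h
  have hpow : √c * (c ^ n * c ^ (-((n : ℝ) + 1 / 2 + b))) = c ^ (-b) := by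
    rw [sqrt_eq_rpow, ← rpow_natCast, ← rpow_add hc, ← rpow_add hc]
    ring_nf
  rw [← hpow, mul_assoc, h, ← mul_assoc, mul_inv_cancel₀ (sqrt_pos.2 hc).ne', one_mul]

lemma integrable_prod_of_nonneg {α β : Type*} [MeasurableSpace α] [MeasurableSpace β]
    {μ : Measure α} {ν : Measure β} [SFinite ν] {f : α × β → ℝ}
    (hf : AEStronglyMeasurable f (μ.prod ν)) (hf₀ : 0 ≤ f)
    (hslice : ∀ x, Integrable (fun y => f (x, y)) ν)
    (hint : Integrable (fun x => ∫ y, f (x, y) ∂ν) μ) : Integrable f (μ.prod ν) :=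
  (integrable_prod_iff hf).2
    ⟨ae_of_all _ hslice, by simpa only [Real.norm_of_nonneg (hf₀ _)] using hint⟩

lemma beta_mul_beta_add (x : ℝ) {y z : ℝ} (hy : 0 < y) (hz : 0 < z) :
    beta x (y + z) * beta y z = Gamma x * Gamma y * Gamma z / Gamma (x + (y + z)) := by
  have hΓ : Gamma (y + z) ≠ 0 := (Gamma_pos_of_pos (add_pos hy hz)).ne'
  simp only [beta]
  field_simp

section Plane

variable (a b : ℕ) {c t : ℝ}

lemma pow_mul_pow_mul_add_sq_add_sq_rpow_neg (x y : ℝ) :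
    x ^ (2 * a) * y ^ (2 * b) * (c + x ^ 2 + y ^ 2) ^ (-((a : ℝ) + b + 1 + t)) =
      x ^ (2 * a) *
        (y ^ (2 * b) * ((c + x ^ 2) + y ^ 2) ^ (-((b : ℝ) + 1 / 2 + (a + 1 / 2 + t)))) := by
  ring_nf

lemma integral_pow_mul_pow_mul_add_sq_add_sq_rpow_neg_slice (hc : 0 < c) (ht : 0 < t) (x : ℝ) :
    ∫ y, x ^ (2 * a) * y ^ (2 * b) * (c + x ^ 2 + y ^ 2) ^ (-((a : ℝ) + b + 1 + t)) =
      beta ((b : ℝ) + 1 / 2) (a + 1 / 2 + t) *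
        (x ^ (2 * a) * (c + x ^ 2) ^ (-((a : ℝ) + 1 / 2 + t))) := by
  simp only [pow_mul_pow_mul_add_sq_add_sq_rpow_neg, integral_const_mul]
  rw [integral_pow_mul_add_sq_rpow_neg b (by positivity) (by positivity)]
  ring

lemma integrable_pow_mul_pow_mul_add_sq_add_sq_rpow_neg (hc : 0 < c) (ht : 0 < t) :
    Integrable (fun ξ : ℝ × ℝ => ξ.1 ^ (2 * a) * ξ.2 ^ (2 * b) *
      (c + ξ.1 ^ 2 + ξ.2 ^ 2) ^ (-((a : ℝ) + b + 1 + t))) := by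
  refine integrable_prod_of_nonneg ?_ ?_ (fun x => ?_) ?_
  · exact (by fun_prop : Measurable _).aestronglyMeasurable
  · intro ξ
    simp only [pow_mul, Pi.zero_apply]
    positivity
  · simp only [pow_mul_pow_mul_add_sq_add_sq_rpow_neg]
    exact (integrable_pow_mul_add_sq_rpow_neg b (by positivity) (by positivity)).const_mul _
  · simp only [integral_pow_mul_pow_mul_add_sq_add_sq_rpow_neg_slice a b hc ht]
    exact (integrable_pow_mul_add_sq_rpow_neg a ht hc).const_mul _

lemma integral_pow_mul_pow_mul_add_sq_add_sq_rpow_neg (hc : 0 < c) (ht : 0 < t) :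
    ∫ ξ : ℝ × ℝ,
      ξ.1 ^ (2 * a) * ξ.2 ^ (2 * b) * (c + ξ.1 ^ 2 + ξ.2 ^ 2) ^ (-((a : ℝ) + b + 1 + t)) =
      c ^ (-t) * (Gamma ((a : ℝ) + 1 / 2) * Gamma ((b : ℝ) + 1 / 2) * Gamma t /
        Gamma ((a : ℝ) + b + 1 + t)) := by
  rw [Measure.volume_eq_prod,
    integral_prod _ (integrable_pow_mul_pow_mul_add_sq_add_sq_rpow_neg a b hc ht)]
  simp only [integral_pow_mul_pow_mul_add_sq_add_sq_rpow_neg_slice a b hc ht, integral_const_mul]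
  rw [integral_pow_mul_add_sq_rpow_neg a ht hc, mul_left_comm,
    beta_mul_beta_add _ (by positivity) ht]
  ring_nf

end Plane

lemma inv_div_add_one_pow {ρ r : ℝ} (hρ : 0 < ρ) (hr : 0 ≤ r) (n : ℕ) :
    ((r / ρ + 1) ^ n)⁻¹ = ρ ^ n * (ρ + r) ^ (-(n : ℝ)) := by
  rw [rpow_neg (by positivity), rpow_natCast, ← inv_pow, ← inv_pow, ← mul_pow]
  congr 1
  field_simp
  ring

theorem integral_monomial_over_plane {ρ : ℝ} (hρ : 0 < ρ) (p q m : ℕ)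
    (hpq : p ≤ q) (hqm : q < m) :
    Integrable (fun ξ : ℝ × ℝ =>
        ξ.1 ^ (2 * (q - p)) * ξ.2 ^ (2 * p) / ((ξ.1 ^ 2 + ξ.2 ^ 2) / ρ + 1) ^ (m + 1)) ∧
    (∫ ξ : ℝ × ℝ,
        ξ.1 ^ (2 * (q - p)) * ξ.2 ^ (2 * p) / ((ξ.1 ^ 2 + ξ.2 ^ 2) / ρ + 1) ^ (m + 1)) =
      ρ ^ (q + 1) * Real.Gamma ((q : ℝ) - (p : ℝ) + 1 / 2) *
        Real.Gamma ((p : ℝ) + 1 / 2) * Real.Gamma ((m : ℝ) - (q : ℝ)) /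
        Real.Gamma ((m : ℝ) + 1) := by
  have ht : (0 : ℝ) < m - q := sub_pos.2 (by exact_mod_cast hqm)
  have hexp : ((q - p : ℕ) : ℝ) + p + 1 + (m - q) = ((m + 1 : ℕ) : ℝ) := by
    push_cast [Nat.cast_sub hpq]
    ring
  have hF : (fun ξ : ℝ × ℝ =>
      ξ.1 ^ (2 * (q - p)) * ξ.2 ^ (2 * p) / ((ξ.1 ^ 2 + ξ.2 ^ 2) / ρ + 1) ^ (m + 1)) =
      fun ξ => ρ ^ (m + 1) * (ξ.1 ^ (2 * (q - p)) * ξ.2 ^ (2 * p) *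
        (ρ + ξ.1 ^ 2 + ξ.2 ^ 2) ^ (-(((q - p : ℕ) : ℝ) + p + 1 + (m - q)))) := by
    ext ξ
    rw [hexp, div_eq_mul_inv, inv_div_add_one_pow hρ (by positivity), add_assoc]
    ring
  rw [hF, integral_const_mul, integral_pow_mul_pow_mul_add_sq_add_sq_rpow_neg _ _ hρ ht]
  refine ⟨(integrable_pow_mul_pow_mul_add_sq_add_sq_rpow_neg _ _ hρ ht).const_mul _, ?_⟩
  have hρpow : ρ ^ (m + 1) * ρ ^ (-((m : ℝ) - q)) = ρ ^ (q + 1) := by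
    rw [← rpow_natCast, ← rpow_add hρ, ← rpow_natCast]
    push_cast
    ring_nf
  rw [hexp, Nat.cast_sub hpq, ← hρpow]
  push_cast
  ring
end
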